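/- Let G be a countable index set with a weight function |·| : G → ℕ, let ρ : G → ℝ≥0, and fix q ≥ 2. Define P_ρ(s) = inf { p > 0 : ∑_{w∈G} (q-1)^{s|w|} ρ(w)^p < ∞ }. Then for any a ≤ b with P_ρ(a) and P_ρ(b) finite, any t ∈ [0,1], and any ε > 0, the sum ∑_{w∈G} (q-1)^{(ta+(1-t)b)|w|} ρ(w)^{t P_ρ(a) + (1-t) P_ρ(b) + ε} is finite; consequently P_ρ(ta+(1-t)b) ≤ t P_ρ(a) + (1-t) P_ρ(b), i.e., P_ρ is convex on the set where it is finite. -/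
import Mathlib


open Filter

/-- `P_ρ(s) = inf { p > 0 : ∑_{w∈G} (q-1)^{s|w|} ρ(w)^p < ∞ }`. -/
noncomputable def Pfun {G : Type*} (level : G → ℕ) (ρ : G → ℝ) (q : ℕ) (s : ℝ) : ℝ :=
  sInf {p : ℝ | 0 < p ∧
    Summable (fun w => ((q : ℝ) - 1) ^ (s * (level w : ℝ)) * ρ w ^ p)}

theorem pfun_convex {G : Type*} [Countable G] (level : G → ℕ) (ρ : G → ℝ)
    (hρ : ∀ w, 0 ≤ ρ w) (q : ℕ) (hq : 2 ≤ q)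
    (a b : ℝ) (hab : a ≤ b)
    (hA : ∀ ε > 0, Summable
      (fun w => ((q : ℝ) - 1) ^ (a * (level w : ℝ)) * ρ w ^ (Pfun level ρ q a + ε)))
    (hB : ∀ ε > 0, Summable
      (fun w => ((q : ℝ) - 1) ^ (b * (level w : ℝ)) * ρ w ^ (Pfun level ρ q b + ε)))
    (t : ℝ) (ht : t ∈ Set.Icc (0 : ℝ) 1) :
    (∀ ε > 0, Summable (fun w =>
      ((q : ℝ) - 1) ^ ((t * a + (1 - t) * b) * (level w : ℝ)) *
        ρ w ^ (t * Pfun level ρ q a + (1 - t) * Pfun level ρ q b + ε))) ∧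
    Pfun level ρ q (t * a + (1 - t) * b) ≤
      t * Pfun level ρ q a + (1 - t) * Pfun level ρ q b := by
  obtain ⟨ht0, ht1⟩ := ht
  have hq1 : (1:ℝ) ≤ (q:ℝ) - 1 := by
    have : (2:ℝ) ≤ (q:ℝ) := by exact_mod_cast hq
    linarith
  have hq0 : (0:ℝ) < (q:ℝ) - 1 := lt_of_lt_of_le one_pos hq1
  have hPa0 : 0 ≤ Pfun level ρ q a := Real.sInf_nonneg (fun x hx => hx.1.le)
  have hPb0 : 0 ≤ Pfun level ρ q b := Real.sInf_nonneg (fun x hx => hx.1.le)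
  set Pa := Pfun level ρ q a
  set Pb := Pfun level ρ q b
  have key : ∀ ε > 0, Summable (fun w =>
      ((q : ℝ) - 1) ^ ((t * a + (1 - t) * b) * (level w : ℝ)) *
        ρ w ^ (t * Pa + (1 - t) * Pb + ε)) := by
    intro ε hε
    rcases eq_or_lt_of_le ht0 with h0 | h0
    · refine (hB ε hε).congr fun w => ?_
      rw [← h0]; norm_num
    rcases eq_or_lt_of_le ht1 with h1 | h1
    · refine (hA ε hε).congr fun w => ?_
      rw [h1]; norm_num
    set g := fun w => ((q:ℝ)-1) ^ (a * (level w:ℝ)) * ρ w ^ (Pa + ε) with hgdef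
    set h := fun w => ((q:ℝ)-1) ^ (b * (level w:ℝ)) * ρ w ^ (Pb + ε) with hhdef
    have hg : Summable g := hA ε hε
    have hh : Summable h := hB ε hε
    have hgnn : ∀ w, 0 ≤ g w := fun w =>
      mul_nonneg (Real.rpow_nonneg hq0.le _) (Real.rpow_nonneg (hρ w) _)
    have hhnn : ∀ w, 0 ≤ h w := fun w =>
      mul_nonneg (Real.rpow_nonneg hq0.le _) (Real.rpow_nonneg (hρ w) _)
    refine Summable.of_nonneg_of_le ?_ ?_ ((hg.mul_left t).add (hh.mul_left (1 - t)))
    · intro w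
      exact mul_nonneg (Real.rpow_nonneg hq0.le _) (Real.rpow_nonneg (hρ w) _)
    · intro w
      have heq : ((q:ℝ)-1) ^ ((t*a+(1-t)*b) * (level w:ℝ)) *
          ρ w ^ (t * Pa + (1-t) * Pb + ε) = g w ^ t * h w ^ (1-t) := by
        rw [hgdef, hhdef]
        rw [Real.mul_rpow (Real.rpow_nonneg hq0.le _) (Real.rpow_nonneg (hρ w) _),
            Real.mul_rpow (Real.rpow_nonneg hq0.le _) (Real.rpow_nonneg (hρ w) _),
            ← Real.rpow_mul hq0.le, ← Real.rpow_mul hq0.le,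
            ← Real.rpow_mul (hρ w), ← Real.rpow_mul (hρ w),
            mul_mul_mul_comm, ← Real.rpow_add hq0]
        have hne : (Pa + ε) * t + (Pb + ε) * (1 - t) ≠ 0 := by
          have h1 : 0 ≤ (Pa + ε) * t := mul_nonneg (by linarith) h0.le
          have h2 : 0 < (Pb + ε) * (1 - t) :=
            mul_pos (by linarith) (by linarith)
          linarith
        rw [← Real.rpow_add' (hρ w) hne]
        congr 1
        · congr 1; ring
        · congr 1; ring
      rw [heq]
      exact Real.geom_mean_le_arith_mean2_weighted h0.le (by linarith)
        (hgnn w) (hhnn w) (by ring)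
  refine ⟨key, ?_⟩
  apply le_of_forall_pos_le_add
  intro ε hε
  apply csInf_le
  · exact ⟨0, fun x hx => hx.1.le⟩
  · refine ⟨?_, key ε hε⟩
    have h1 : 0 ≤ t * Pa := mul_nonneg ht0 hPa0
    have h2 : 0 ≤ (1 - t) * Pb := mul_nonneg (by linarith) hPb0
    linarith
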